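/- arXiv:1510.00040 — 5 statements merged into one kernel-verified Lean document; each statement's English description precedes it below -/
import Mathlib

section
/- Let λ ∈ ℂ with Re(λ) < 0, and suppose (λ, (r, q)) is an eigenpair of the Hamiltonian matrix [[Ã, BBᴴ],[C̃ᴴC̃, −Ãᴴ]], i.e., Ãr + BBᴴq = λr and C̃ᴴC̃r − Ãᴴq = λq, and −λ is not an eigenvalue of Ã. Then q = (Ãᴴ + λI)⁻¹ C̃ᴴ (C̃ r), and qᴴr = (1/(2 Re λ))(qᴴBBᴴq + rᴴC̃ᴴC̃r). -/
/-!
The second block row says `(Ãᴴ + λ I) q = C̃ᴴ C̃ r`, which is inverted directly. For the quadratic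
identity, pair the first row with `q` and the conjugate transpose of the second with `r`: the
cross terms `qᴴ Ã r` cancel, leaving `(λ + λ̄) qᴴ r = qᴴ B Bᴴ q + rᴴ C̃ᴴ C̃ r`.
-/

open Matrix

namespace Matrix

variable {n R : Type*} [Fintype n]

theorem add_smul_one_mulVec_eq_of_sub_mulVec_eq [DecidableEq n] [CommRing R]
    {A H : Matrix n n R} {r q : n → R} {l : R} (h : H *ᵥ r - A *ᵥ q = l • q) :
    (A + l • (1 : Matrix n n R)) *ᵥ q = H *ᵥ r := by
  rw [add_mulVec, smul_mulVec, one_mulVec, ← h]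
  abel

theorem add_star_mul_star_dotProduct_of_hamiltonian_eigen [CommRing R] [StarRing R]
    {A G H : Matrix n n R} (hH : H.IsHermitian) {r q : n → R} {l : R}
    (h1 : A *ᵥ r + G *ᵥ q = l • r) (h2 : H *ᵥ r - Aᴴ *ᵥ q = l • q) :
    (l + star l) * (star q ⬝ᵥ r) = star q ⬝ᵥ G *ᵥ q + star r ⬝ᵥ H *ᵥ r := by
  have first_row : star q ⬝ᵥ A *ᵥ r + star q ⬝ᵥ G *ᵥ q = l * (star q ⬝ᵥ r) := by
    rw [← dotProduct_add, h1, dotProduct_smul, smul_eq_mul]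
  have second_row : star q ⬝ᵥ A *ᵥ r = star r ⬝ᵥ H *ᵥ r - star l * (star q ⬝ᵥ r) := by
    have hAq : Aᴴ *ᵥ q = H *ᵥ r - l • q := by rw [← h2, sub_sub_cancel]
    calc star q ⬝ᵥ A *ᵥ r = star (Aᴴ *ᵥ q) ⬝ᵥ r := by
          rw [star_mulVec, dotProduct_mulVec, conjTranspose_conjTranspose]
      _ = star r ⬝ᵥ H *ᵥ r - star l * (star q ⬝ᵥ r) := by
          rw [hAq, star_sub, sub_dotProduct, star_mulVec, ← dotProduct_mulVec, hH.eq,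
            star_smul, smul_dotProduct, smul_eq_mul]
  linear_combination second_row - first_row

end Matrix

theorem hamiltonian_eigenpair_identities
    {n m p : Type*} [Fintype n] [DecidableEq n] [Fintype m] [Fintype p]
    (At : Matrix n n ℂ) (B : Matrix n m ℂ) (Ct : Matrix p n ℂ)
    (r q : n → ℂ) (l : ℂ) (hl : l.re < 0)
    (hinv : IsUnit (Atᴴ + l • (1 : Matrix n n ℂ)))
    (h1 : At.mulVec r + (B * Bᴴ).mulVec q = l • r)
    (h2 : (Ctᴴ * Ct).mulVec r - Atᴴ.mulVec q = l • q) :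
    q = (Atᴴ + l • (1 : Matrix n n ℂ))⁻¹.mulVec (Ctᴴ.mulVec (Ct.mulVec r)) ∧
    dotProduct (star q) r =
      (1 / (2 * (l.re : ℂ))) *
        (dotProduct (star q) ((B * Bᴴ).mulVec q) +
          dotProduct (star r) ((Ctᴴ * Ct).mulVec r)) := by
  have := hinv.invertible
  refine ⟨(inv_mulVec_eq_vec ?_).symm, ?_⟩
  · rw [mulVec_mulVec, add_smul_one_mulVec_eq_of_sub_mulVec_eq h2]
  · have hre : (2 * (l.re : ℂ)) ≠ 0 := by exact_mod_cast (mul_neg_of_pos_of_neg two_pos hl).ne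
    rw [← add_star_mul_star_dotProduct_of_hamiltonian_eigen (isHermitian_conjTranspose_mul_self Ct)
      h1 h2, Complex.star_def, Complex.add_conj, Complex.ofReal_mul, Complex.ofReal_ofNat, one_div,
      inv_mul_cancel_left₀ hre]
end

section
/- Let Ξ ≥ 0 with R(Ξ) = C̃ᴴC̃, let Re λ < 0 with Ãᴴ + λI invertible where Ã = A − BBᴴΞ. Define Ṽ₁ = √(−2 Re λ)(Ãᴴ + λI)⁻¹C̃ᴴ, Ỹ₁ = I − (1/(2 Re λ))(Ṽ₁ᴴB)(Ṽ₁ᴴB)ᴴ, and X̃₁ = Ṽ₁Ỹ₁⁻¹Ṽ₁ᴴ. Then R(Ξ + X̃₁) = ĈᴴĈ with Ĉᴴ = C̃ᴴ + √(−2 Re λ) · Ṽ₁Ỹ₁⁻¹; in particular R(Ξ + X̃₁) ≥ 0. -/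
open Matrix
open scoped ComplexOrder

/-!
Write the update as `W = Ṽ₁ K Ṽ₁ᴴ` with `K = Ỹ₁⁻¹`. Since `Ξ` and `G` are Hermitian, the residual
expands as `R(Ξ) + Ãᴴ W + W Ã - W G W`. The identity `Ãᴴ Ṽ₁ = s C̃ᴴ - λ Ṽ₁` (with `s = √(-2 Re λ)`)
and the Gram identity `Ṽ₁ᴴ G Ṽ₁ = 2 Re λ (I - Ỹ₁)` turn this into
`C̃ᴴC̃ + s C̃ᴴ K Ṽ₁ᴴ + s Ṽ₁ K C̃ - 2 Re λ Ṽ₁ K² Ṽ₁ᴴ`, which is `Ĉ Ĉᴴ` because `s² = -2 Re λ`.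
Invertibility of `Ỹ₁` comes for free: for `Re λ < 0` it is `I` plus a positive semidefinite matrix.
-/

namespace Matrix

theorem posDef_one_sub_inv_smul_self_mul_conjTranspose {p m 𝕜 : Type*} [Fintype p]
    [DecidableEq p] [Fintype m] [RCLike 𝕜] {r : ℝ} (hr : r < 0) (N : Matrix p m 𝕜) :
    (1 - (r : 𝕜)⁻¹ • (N * Nᴴ)).PosDef := by
  rw [sub_eq_add_neg, ← neg_smul, ← RCLike.ofReal_inv, ← RCLike.ofReal_neg]
  exact PosDef.one.add_posSemidef
    ((posSemidef_self_mul_conjTranspose N).smul (RCLike.ofReal_nonneg.mpr (by simpa using hr.le)))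

variable {n p : Type*} [Fintype n] [Fintype p] {α : Type*} [CommRing α] [StarRing α]

def riccatiResidual (A G Q M : Matrix n n α) : Matrix n n α :=
  Aᴴ * M + M * A + Q - M * G * M

theorem riccatiResidual_add {A G Q Ξ : Matrix n n α} (hΞ : Ξᴴ = Ξ) (hG : Gᴴ = G)
    (W : Matrix n n α) :
    riccatiResidual A G Q (Ξ + W) =
      riccatiResidual A G Q Ξ + (A - G * Ξ)ᴴ * W + W * (A - G * Ξ) - W * G * W := by
  simp only [riccatiResidual, conjTranspose_sub, conjTranspose_mul, hΞ, hG, add_mul, mul_add,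
    sub_mul, mul_sub, Matrix.mul_assoc]
  abel

theorem riccatiResidual_add_mul_mul_conjTranspose [DecidableEq p] {A G Q Ξ : Matrix n n α}
    {C : Matrix p n α} {V : Matrix n p α} {K Y : Matrix p p α} {l s : α}
    (hΞ : Ξᴴ = Ξ) (hG : Gᴴ = G) (hres : riccatiResidual A G Q Ξ = Cᴴ * C)
    (hs : star s = s) (hss : s * s = -(l + star l))
    (hV : (A - G * Ξ)ᴴ * V = s • Cᴴ - l • V)
    (hY : Vᴴ * G * V = (l + star l) • (1 - Y))
    (hK : Kᴴ = K) (hKYK : K * Y * K = K) :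
    riccatiResidual A G Q (Ξ + V * K * Vᴴ) = (Cᴴ + s • (V * K)) * (Cᴴ + s • (V * K))ᴴ := by
  have hV' : Vᴴ * (A - G * Ξ) = s • C - star l • Vᴴ := by
    simpa [conjTranspose_mul, hs] using congrArg conjTranspose hV
  have hKYK' : K * (Y * (K * Vᴴ)) = K * Vᴴ := by
    rw [← Matrix.mul_assoc, ← Matrix.mul_assoc, hKYK]
  calc riccatiResidual A G Q (Ξ + V * K * Vᴴ)
      = riccatiResidual A G Q Ξ + ((A - G * Ξ)ᴴ * V) * (K * Vᴴ) + (V * K) * (Vᴴ * (A - G * Ξ))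
          - (V * K) * (Vᴴ * G * V) * (K * Vᴴ) := by
        rw [riccatiResidual_add hΞ hG]
        simp only [Matrix.mul_assoc]
    _ = (Cᴴ + s • (V * K)) * (Cᴴ + s • (V * K))ᴴ := by
        rw [hres, hV, hV', hY]
        simp only [conjTranspose_add, conjTranspose_smul, conjTranspose_mul,
          conjTranspose_conjTranspose, hK, hs, Matrix.mul_add, Matrix.add_mul, Matrix.sub_mul,
          Matrix.mul_sub, Matrix.smul_mul, Matrix.mul_smul, Matrix.mul_assoc, Matrix.mul_one,
          smul_add, smul_smul, hss, hKYK']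
        module

omit [Fintype p] [StarRing α] in
theorem mul_eq_smul_sub_smul_of_eq_smul_inv_mul [DecidableEq n] {M : Matrix n n α}
    {C : Matrix n p α} {V : Matrix n p α} {l s : α} (hM : IsUnit (M + l • 1))
    (hV : V = s • (M + l • 1)⁻¹ * C) : M * V = s • C - l • V := by
  have hMV : (M + l • 1) * V = s • C := by
    rw [hV, Matrix.smul_mul, Matrix.mul_smul, ← Matrix.mul_assoc,
      mul_nonsing_inv _ ((isUnit_iff_isUnit_det _).mp hM), Matrix.one_mul]
  rw [eq_sub_iff_add_eq, ← hMV, Matrix.add_mul, Matrix.smul_mul, Matrix.one_mul]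

end Matrix

theorem residual_update_factorization
    {n m p : Type*} [Fintype n] [DecidableEq n] [Fintype m] [Fintype p] [DecidableEq p]
    (A Q Ξ : Matrix n n ℂ) (B : Matrix n m ℂ) (Ct : Matrix p n ℂ)
    (l : ℂ) (hl : l.re < 0)
    (hΞ : Ξ.PosSemidef)
    (hres : Aᴴ * Ξ + Ξ * A + Q - Ξ * (B * Bᴴ) * Ξ = Ctᴴ * Ct)
    (hinv : IsUnit ((A - B * Bᴴ * Ξ)ᴴ + l • (1 : Matrix n n ℂ)))
    (Vt : Matrix n p ℂ)
    (hVt : Vt = (Real.sqrt (-2 * l.re) : ℂ) •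
        ((A - B * Bᴴ * Ξ)ᴴ + l • (1 : Matrix n n ℂ))⁻¹ * Ctᴴ)
    (Yt : Matrix p p ℂ)
    (hYt : Yt = (1 : Matrix p p ℂ) -
        (1 / (2 * (l.re : ℂ))) • ((Vtᴴ * B) * (Vtᴴ * B)ᴴ))
    (X : Matrix n n ℂ)
    (hX : X = Ξ + Vt * Yt⁻¹ * Vtᴴ)
    (Chat : Matrix n p ℂ)
    (hChat : Chat = Ctᴴ + (Real.sqrt (-2 * l.re) : ℂ) • (Vt * Yt⁻¹)) :
    Aᴴ * X + X * A + Q - X * (B * Bᴴ) * X = Chat * Chatᴴ ∧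
    (Aᴴ * X + X * A + Q - X * (B * Bᴴ) * X).PosSemidef := by
  have hre : 2 * (l.re : ℂ) = ((2 * l.re : ℝ) : ℂ) := by norm_num
  have hconj : l + star l = 2 * (l.re : ℂ) := by
    rw [hre]; exact Complex.add_conj l
  have hYpos : Yt.PosDef := by
    rw [hYt, one_div, hre]
    exact posDef_one_sub_inv_smul_self_mul_conjTranspose (r := 2 * l.re) (by linarith) _
  have hYunit : IsUnit Yt.det := (isUnit_iff_isUnit_det _).mp hYpos.isUnit
  have hsq : (Real.sqrt (-2 * l.re) : ℂ) * Real.sqrt (-2 * l.re) = -(l + star l) := by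
    rw [← Complex.ofReal_mul, Real.mul_self_sqrt (by linarith), hconj]
    push_cast; ring
  have hGram : Vtᴴ * (B * Bᴴ) * Vt = (l + star l) • (1 - Yt) := by
    rw [hconj, hYt, sub_sub_cancel, smul_smul, mul_one_div_cancel (by simpa using hl.ne)]
    simp only [one_smul, conjTranspose_mul, conjTranspose_conjTranspose, Matrix.mul_assoc]
  have hfac : Aᴴ * X + X * A + Q - X * (B * Bᴴ) * X = Chat * Chatᴴ := by
    rw [hX, hChat]
    exact riccatiResidual_add_mul_mul_conjTranspose hΞ.isHermitian
      (isHermitian_mul_conjTranspose_self B) hres (Complex.conj_ofReal _) hsq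
      (mul_eq_smul_sub_smul_of_eq_smul_inv_mul hinv hVt) hGram hYpos.isHermitian.inv
      (by rw [nonsing_inv_mul _ hYunit, Matrix.one_mul])
  exact ⟨hfac, hfac ▸ posSemidef_self_mul_conjTranspose Chat⟩
end

section
/- One step of the qADI iteration satisfies the identity X^{qADI}_{k−1/2} − X_{k−1} = −R(X_{k−1})·(A − GX_{k−1} + conj(σ_k)I)⁻¹, where X^{qADI}_{k−1/2} is defined by X^{qADI}_{k−1/2}(A + conj(σ_k)I − GX_{k−1}) = −Q − (Aᴴ − conj(σ_k)I)X_{k−1}, and R(M) = AᴴM + MA + Q − MGM. -/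
open Matrix

/- Expanding `(Xh - X) * (A + c - G * X)` with the half-step equation leaves the residual plus
`c * X - X * c`, which vanishes because the shift commutes with `X`. -/
theorem sub_mul_eq_neg_riccati_residual_of_half_step {R : Type*} [Ring R]
    {A A' G Q X Xh c : R} (hc : Commute c X)
    (hXh : Xh * (A + c - G * X) = -Q - (A' - c) * X) :
    (Xh - X) * (A + c - G * X) = -(A' * X + X * A + Q - X * G * X) := by
  rw [sub_mul, hXh]
  simp only [mul_sub, sub_mul, mul_add, hc.eq, mul_assoc]
  abel

theorem qadi_half_step_identity_general
    {n : Type*} [Fintype n] [DecidableEq n]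
    (A G Q X Xh : Matrix n n ℂ)
    (σ : ℂ)
    (hinv : IsUnit (A + (starRingEnd ℂ σ) • (1 : Matrix n n ℂ) - G * X))
    (hXh : Xh * (A + (starRingEnd ℂ σ) • (1 : Matrix n n ℂ) - G * X) =
      -Q - (Aᴴ - (starRingEnd ℂ σ) • (1 : Matrix n n ℂ)) * X) :
    Xh - X = -(Aᴴ * X + X * A + Q - X * G * X) *
      (A - G * X + (starRingEnd ℂ σ) • (1 : Matrix n n ℂ))⁻¹ := by
  have hshift : A - G * X + (starRingEnd ℂ σ) • (1 : Matrix n n ℂ) =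
      A + (starRingEnd ℂ σ) • (1 : Matrix n n ℂ) - G * X := sub_add_eq_add_sub _ _ _
  rw [hshift, ← sub_mul_eq_neg_riccati_residual_of_half_step
    ((Commute.one_left X).smul_left _) hXh]
  exact (mul_nonsing_inv_cancel_right _ _ ((isUnit_iff_isUnit_det _).mp hinv)).symm

theorem qadi_half_step_identity
    {n : Type*} [Fintype n] [DecidableEq n]
    (A G Q X Xh : Matrix n n ℂ)
    (hG : G.IsHermitian) (hQ : Q.IsHermitian) (σ : ℂ)
    (hinv : IsUnit (A + (starRingEnd ℂ σ) • (1 : Matrix n n ℂ) - G * X))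
    (hXh : Xh * (A + (starRingEnd ℂ σ) • (1 : Matrix n n ℂ) - G * X) =
      -Q - (Aᴴ - (starRingEnd ℂ σ) • (1 : Matrix n n ℂ)) * X) :
    Xh - X = -(Aᴴ * X + X * A + Q - X * G * X) *
      (A - G * X + (starRingEnd ℂ σ) • (1 : Matrix n n ℂ))⁻¹ :=
  qadi_half_step_identity_general A G Q X Xh σ hinv hXh
end

section
/- Cayley subspace iteration equals qADI: let X_{k−1} be given, σ_k with Re σ_k < 0, H = [[A, G],[Q, −Aᴴ]], and define [M_k; N_k] = (H − σ_k I)⁻¹(H + conj(σ_k)I)[I; −X_{k−1}], X_k = −N_k M_k⁻¹. Then X_k satisfies (Aᴴ + σ_k I − X_{k−1/2}G)X_k = −Q − X_{k−1/2}(A − σ_k I), where X_{k−1/2} = −N_{k−1/2}M_{k−1/2}⁻¹ with M_{k−1/2} = A + conj(σ_k)I − GX_{k−1}, N_{k−1/2} = Q + (Aᴴ − conj(σ_k)I)X_{k−1}... specifically N_{k−1/2} = Q − (−Aᴴ + conj(σ_k)I)X_{k−1}. -/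
/-!
In the Cayley step `[M_k; N_k] = (H - σ)⁻¹ (H + σ̄) [I; -X_{k-1}]` the vector
`(H + σ̄) [I; -X_{k-1}]` is exactly `[M_{k-1/2}; N_{k-1/2}]`. So `H - σ` maps the graph
`[I; -X_k] M_k` onto the graph `[I; -X_{k-1/2}] M_{k-1/2}`, and a block matrix that maps the
graph of `-X` onto the graph of `-Y` satisfies the Riccati-type relation
`Y P₁₁ + P₂₁ = (Y P₁₂ + P₂₂) X`. For `P = H - σ` this is the qADI equation.
-/

open Matrix

namespace Matrix

variable {R : Type*} {l m : Type*} [DecidableEq l]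

theorem riccati_of_fromBlocks_mul_graph [Ring R] [Fintype l] [Fintype m]
    {P₁₁ : Matrix l l R} {P₁₂ : Matrix l m R} {P₂₁ : Matrix m l R} {P₂₂ : Matrix m m R}
    {X Y : Matrix m l R} {M M' : Matrix l l R} (hM : IsUnit M)
    (h : fromBlocks P₁₁ P₁₂ P₂₁ P₂₂ * fromRows M (-(X * M)) = fromRows M' (-(Y * M'))) :
    Y * P₁₁ + P₂₁ = (Y * P₁₂ + P₂₂) * X := by
  rw [fromBlocks_mul_fromRows, fromRows_ext_iff] at h
  obtain ⟨h₁, h₂⟩ := h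
  obtain ⟨M₀, hMM₀⟩ := hM.exists_right_inv
  have hcancel : Function.Injective fun x : Matrix m l R => x * M := fun x y hxy => by
    simpa only [Matrix.mul_assoc, hMM₀, Matrix.mul_one] using congrArg (· * M₀) hxy
  apply hcancel
  rw [← sub_eq_zero]
  calc (Y * P₁₁ + P₂₁) * M - (Y * P₁₂ + P₂₂) * X * M
      = Y * (P₁₁ * M + P₁₂ * -(X * M)) + (P₂₁ * M + P₂₂ * -(X * M)) := by
        simp only [Matrix.add_mul, Matrix.mul_add, Matrix.mul_neg, Matrix.mul_assoc]
        abel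
    _ = 0 := by rw [h₁, h₂, add_neg_cancel]

theorem fromBlocks_add_smul_one [CommRing R] [DecidableEq m] (A : Matrix l l R) (B : Matrix l m R)
    (C : Matrix m l R) (D : Matrix m m R) (a : R) :
    fromBlocks A B C D + a • 1 = fromBlocks (A + a • 1) B C (D + a • 1) := by
  rw [← fromBlocks_one, fromBlocks_smul, fromBlocks_add]
  simp

theorem fromBlocks_sub_smul_one [CommRing R] [DecidableEq m] (A : Matrix l l R) (B : Matrix l m R)
    (C : Matrix m l R) (D : Matrix m m R) (a : R) :
    fromBlocks A B C D - a • 1 = fromBlocks (A - a • 1) B C (D - a • 1) := by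
  simp only [sub_eq_add_neg, ← neg_smul, fromBlocks_add_smul_one]

theorem eq_neg_mul_of_eq_neg_mul_nonsing_inv [CommRing R] [Fintype l] {X N M : Matrix l l R}
    (hM : IsUnit M) (hX : X = -N * M⁻¹) : N = -(X * M) := by
  rw [hX, nonsing_inv_mul_cancel_right _ _ ((isUnit_iff_isUnit_det M).mp hM), neg_neg]

end Matrix

theorem cayley_step_satisfies_qadi_general
    {n : Type*} [Fintype n] [DecidableEq n]
    (A G Q Xp : Matrix n n ℂ)
    (σ : ℂ)
    (H : Matrix (n ⊕ n) (n ⊕ n) ℂ)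
    (hH : H = Matrix.fromBlocks A G Q (-Aᴴ))
    (hHinv : IsUnit (H - σ • (1 : Matrix (n ⊕ n) (n ⊕ n) ℂ)))
    (MN : Matrix (n ⊕ n) n ℂ)
    (hMN : MN = (H - σ • (1 : Matrix (n ⊕ n) (n ⊕ n) ℂ))⁻¹ *
      ((H + (starRingEnd ℂ σ) • (1 : Matrix (n ⊕ n) (n ⊕ n) ℂ)) *
        Matrix.fromRows (1 : Matrix n n ℂ) (-Xp)))
    (Mk Nk : Matrix n n ℂ)
    (hMk : Mk = MN.toRows₁) (hNk : Nk = MN.toRows₂)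
    (hMkinv : IsUnit Mk)
    (Mh Nh : Matrix n n ℂ)
    (hMh : Mh = A + (starRingEnd ℂ σ) • (1 : Matrix n n ℂ) - G * Xp)
    (hNh : Nh = Q - (-Aᴴ + (starRingEnd ℂ σ) • (1 : Matrix n n ℂ)) * Xp)
    (hMhinv : IsUnit Mh)
    (Xk Xh : Matrix n n ℂ)
    (hXk : Xk = -Nk * Mk⁻¹) (hXh : Xh = -Nh * Mh⁻¹) :
    (Aᴴ + σ • (1 : Matrix n n ℂ) - Xh * G) * Xk =
      -Q - Xh * (A - σ • (1 : Matrix n n ℂ)) := by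
  have hHalf : (H + starRingEnd ℂ σ • (1 : Matrix (n ⊕ n) (n ⊕ n) ℂ)) *
      fromRows (1 : Matrix n n ℂ) (-Xp) = fromRows Mh Nh := by
    rw [hH, fromBlocks_add_smul_one, fromBlocks_mul_fromRows, hMh, hNh]
    congr 1 <;> noncomm_ring
  have hStep : (H - σ • (1 : Matrix (n ⊕ n) (n ⊕ n) ℂ)) * fromRows Mk Nk = fromRows Mh Nh := by
    rw [hMk, hNk, fromRows_toRows, hMN,
      mul_nonsing_inv_cancel_left _ _ ((isUnit_iff_isUnit_det _).mp hHinv), hHalf]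
  rw [hH, fromBlocks_sub_smul_one, eq_neg_mul_of_eq_neg_mul_nonsing_inv hMkinv hXk,
    eq_neg_mul_of_eq_neg_mul_nonsing_inv hMhinv hXh] at hStep
  have hRiccati := riccati_of_fromBlocks_mul_graph hMkinv hStep
  calc (Aᴴ + σ • 1 - Xh * G) * Xk = -((Xh * G + (-Aᴴ - σ • 1)) * Xk) := by noncomm_ring
    _ = -Q - Xh * (A - σ • 1) := by rw [← hRiccati]; noncomm_ring

theorem cayley_step_satisfies_qadi
    {n : Type*} [Fintype n] [DecidableEq n]
    (A G Q Xp : Matrix n n ℂ)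
    (hG : G.IsHermitian) (hQ : Q.IsHermitian)
    (σ : ℂ) (hσ : σ.re < 0)
    (H : Matrix (n ⊕ n) (n ⊕ n) ℂ)
    (hH : H = Matrix.fromBlocks A G Q (-Aᴴ))
    (hHinv : IsUnit (H - σ • (1 : Matrix (n ⊕ n) (n ⊕ n) ℂ)))
    (MN : Matrix (n ⊕ n) n ℂ)
    (hMN : MN = (H - σ • (1 : Matrix (n ⊕ n) (n ⊕ n) ℂ))⁻¹ *
      ((H + (starRingEnd ℂ σ) • (1 : Matrix (n ⊕ n) (n ⊕ n) ℂ)) *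
        Matrix.fromRows (1 : Matrix n n ℂ) (-Xp)))
    (Mk Nk : Matrix n n ℂ)
    (hMk : Mk = MN.toRows₁) (hNk : Nk = MN.toRows₂)
    (hMkinv : IsUnit Mk)
    (Mh Nh : Matrix n n ℂ)
    (hMh : Mh = A + (starRingEnd ℂ σ) • (1 : Matrix n n ℂ) - G * Xp)
    (hNh : Nh = Q - (-Aᴴ + (starRingEnd ℂ σ) • (1 : Matrix n n ℂ)) * Xp)
    (hMhinv : IsUnit Mh)
    (Xk Xh : Matrix n n ℂ)
    (hXk : Xk = -Nk * Mk⁻¹) (hXh : Xh = -Nh * Mh⁻¹) :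
    (Aᴴ + σ • (1 : Matrix n n ℂ) - Xh * G) * Xk =
      -Q - Xh * (A - σ • (1 : Matrix n n ℂ)) :=
  cayley_step_satisfies_qadi_general A G Q Xp σ H hH hHinv MN hMN Mk Nk hMk hNk hMkinv Mh Nh hMh hNh
    hMhinv Xk Xh hXk hXh
end

section
/- Double-step RADI with conjugate shifts: if σ₂ = conj(σ₁) = conj(σ) with σ ∈ ℂ∖ℝ, Re σ < 0, then V₂ = V₁ + 2 conj(σ)·Im(V₁)·S⁻¹Ỹ₁, where S = Im(σ)Ỹ₁ + (V₁ᴴB)V_iᴴ with V_i = (Im V₁)ᵀB, and Ỹ₁ = I − (1/(2 Re σ))(V₁ᴴB)(V₁ᴴB)ᴴ. -/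
/-!
Let `N = Aᵀ - X₀BBᵀ` (real), `M₀ = N + σI` and `M₁ = Aᴴ - X₁G + σ̄I = N + σ̄I - V₁Ỹ₁⁻¹V₁ᴴG`,
so that `M₀V₁ = αR₀` with `α = √(-2 Re σ)` and `R₀` real. Conjugating gives
`(N + σ̄I) conj V₁ = αR₀`, and subtracting this from `(N + σ̄I)V₁ = αR₀ + (σ̄ - σ)V₁` shows
`(N + σ̄I) Im V₁ = -(Im σ)V₁`, hence `M₁ Im V₁ = -V₁Ỹ₁⁻¹S`. On the other hand
`V₁ᴴGV₁ = 2 Re σ (I - Ỹ₁)` gives `M₁V₁ = αR₁ + 2σ̄V₁`. So `M₁` maps the claimed value of `V₂`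
to `αR₁ = M₁V₂`.
-/

open Matrix ComplexConjugate

namespace Matrix

variable {m n p : Type*}

theorem map_conj_map_ofReal (M : Matrix m p ℝ) :
    (M.map Complex.ofReal).map conj = M.map Complex.ofReal := by
  ext; simp

theorem of_im_eq_smul_sub_map_conj (V : Matrix n p ℂ) :
    (of fun i j => ((V i j).im : ℂ)) = (2 * Complex.I)⁻¹ • (V - V.map conj) := by
  ext i j
  simp only [of_apply, smul_apply, sub_apply, map_apply, smul_eq_mul, Complex.sub_conj]
  push_cast
  field_simp

theorem transpose_conjTranspose_of_im (V : Matrix m p ℂ) :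
    (of fun i j => ((V i j).im : ℂ))ᵀᴴ = of fun i j => ((V i j).im : ℂ) := by
  ext; simp

theorem add_conj_smul_one_mul_of_im [Fintype n] [DecidableEq n] {N : Matrix n n ℝ}
    {R : Matrix n p ℝ} {V : Matrix n p ℂ} {σ : ℂ}
    (h : (N.map Complex.ofReal + σ • 1) * V = R.map Complex.ofReal) :
    (N.map Complex.ofReal + conj σ • 1) * (of fun i j => ((V i j).im : ℂ)) =
      -(σ.im : ℂ) • V := by
  have hconj : (N.map Complex.ofReal + conj σ • 1) * V.map conj = R.map Complex.ofReal := by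
    have hM : (N.map Complex.ofReal + σ • 1).map conj = N.map Complex.ofReal + conj σ • 1 := by
      ext i j
      by_cases hij : i = j <;> simp [hij]
    simpa only [Matrix.map_mul, hM, map_conj_map_ofReal] using congrArg (Matrix.map · conj) h
  have hshift : (N.map Complex.ofReal + conj σ • 1) * V =
      R.map Complex.ofReal + (conj σ - σ) • V := by
    rw [← h]
    simp only [Matrix.add_mul, Matrix.smul_mul, Matrix.one_mul, sub_smul]
    abel
  rw [of_im_eq_smul_sub_map_conj, Matrix.mul_smul, Matrix.mul_sub, hshift, hconj,
    add_sub_cancel_left, smul_smul, ← neg_sub, Complex.sub_conj]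
  congr 1
  push_cast
  field_simp

theorem conjTranspose_mul_mul_self_eq_smul_one_sub {K : Type*} [Field K] [StarRing K]
    [Fintype n] [Fintype m] [DecidableEq p] {V : Matrix n p K} {B : Matrix n m K}
    {Y : Matrix p p K} {ρ : K} (hρ : ρ ≠ 0) (hY : Y = 1 - (1 / ρ) • ((Vᴴ * B) * (Vᴴ * B)ᴴ)) :
    Vᴴ * (B * Bᴴ) * V = ρ • (1 - Y) := by
  rw [hY, sub_sub_cancel, smul_smul, mul_one_div_cancel hρ, one_smul, conjTranspose_mul,
    conjTranspose_conjTranspose]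
  simp only [Matrix.mul_assoc]

section Update

variable {K : Type*} [CommRing K] [Fintype n] [Fintype p] [DecidableEq p]

theorem sub_mul_inv_mul_mul_eq_neg {M : Matrix n n K} {V W : Matrix n p K} {Y : Matrix p p K}
    {U : Matrix p n K} {c : K} (hY : IsUnit Y.det) (hW : M * W = -c • V) :
    (M - V * Y⁻¹ * U) * W = -(V * (Y⁻¹ * (c • Y + U * W))) := by
  rw [Matrix.sub_mul, hW, Matrix.mul_add, Matrix.mul_smul, nonsing_inv_mul _ hY, Matrix.mul_add,
    Matrix.mul_smul, Matrix.mul_one, Matrix.mul_assoc, Matrix.mul_assoc, neg_smul]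
  abel

theorem add_smul_one_sub_mul_inv_mul_mul_self [DecidableEq n] {M : Matrix n n K}
    {V R : Matrix n p K} {Y : Matrix p p K} {U : Matrix p n K} {σ τ ρ : K} (hY : IsUnit Y.det)
    (hV : (M + σ • 1) * V = R) (hUV : U * V = ρ • (1 - Y)) :
    (M + τ • 1 - V * Y⁻¹ * U) * V = (R - ρ • (V * Y⁻¹)) + (τ - σ + ρ) • V := by
  have hτ : M + τ • 1 = M + σ • 1 + (τ - σ) • (1 : Matrix n n K) := by
    rw [sub_smul]; abel
  rw [Matrix.sub_mul, hτ, Matrix.add_mul, hV, Matrix.mul_assoc, hUV, Matrix.smul_mul,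
    Matrix.one_mul, Matrix.mul_smul, Matrix.mul_sub, Matrix.mul_one, Matrix.mul_assoc,
    nonsing_inv_mul _ hY, Matrix.mul_one, smul_sub, add_smul]
  abel

theorem mul_add_smul_mul_inv_mul_eq {M : Matrix n n K} {V W T : Matrix n p K}
    {Y S : Matrix p p K} {c : K} (hY : IsUnit Y.det) (hS : IsUnit S.det)
    (hV : M * V = T + c • V) (hW : M * W = -(V * (Y⁻¹ * S))) :
    M * (V + c • (W * (S⁻¹ * Y))) = T := by
  rw [Matrix.mul_add, Matrix.mul_smul, ← Matrix.mul_assoc, hW, hV, Matrix.neg_mul,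
    Matrix.mul_assoc, Matrix.mul_assoc, ← Matrix.mul_assoc S, mul_nonsing_inv _ hS,
    Matrix.one_mul, nonsing_inv_mul _ hY, Matrix.mul_one, smul_neg, add_neg_cancel_right]

end Update

end Matrix

theorem Complex.conj_sub_add_two_re (σ : ℂ) : conj σ - σ + 2 * σ.re = 2 * conj σ := by
  have := Complex.add_conj σ
  push_cast at this
  linear_combination -this

theorem radi_double_step_conjugate_shift_general
    {n m p : Type*} [Fintype n] [DecidableEq n] [Fintype m] [Fintype p] [DecidableEq p]
    (A X0 : Matrix n n ℝ) (B : Matrix n m ℝ) (R0 : Matrix n p ℝ)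
    (σ : ℂ) (hσre : σ.re < 0)
    (Ac X0c : Matrix n n ℂ) (Bc : Matrix n m ℂ) (R0c : Matrix n p ℂ)
    (hAc : Ac = A.map Complex.ofReal) (hX0c : X0c = X0.map Complex.ofReal)
    (hBc : Bc = B.map Complex.ofReal) (hR0c : R0c = R0.map Complex.ofReal)
    (Gc : Matrix n n ℂ) (hGc : Gc = Bc * Bcᴴ)
    (hinv1 : IsUnit (Acᴴ - X0c * Gc + σ • (1 : Matrix n n ℂ)))
    (V1 : Matrix n p ℂ)
    (hV1 : V1 = (Real.sqrt (-2 * σ.re) : ℂ) •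
        (Acᴴ - X0c * Gc + σ • (1 : Matrix n n ℂ))⁻¹ * R0c)
    (Y1 : Matrix p p ℂ)
    (hY1 : Y1 = (1 : Matrix p p ℂ) -
        (1 / (2 * (σ.re : ℂ))) • ((V1ᴴ * Bc) * (V1ᴴ * Bc)ᴴ))
    (hY1inv : IsUnit Y1)
    (X1 : Matrix n n ℂ) (hX1 : X1 = X0c + V1 * Y1⁻¹ * V1ᴴ)
    (R1 : Matrix n p ℂ)
    (hR1 : R1 = R0c + (Real.sqrt (-2 * σ.re) : ℂ) • (V1 * Y1⁻¹))
    (hinv2 : IsUnit (Acᴴ - X1 * Gc + (starRingEnd ℂ σ) • (1 : Matrix n n ℂ)))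
    (V2 : Matrix n p ℂ)
    (hV2 : V2 = (Real.sqrt (-2 * σ.re) : ℂ) •
        (Acᴴ - X1 * Gc + (starRingEnd ℂ σ) • (1 : Matrix n n ℂ))⁻¹ * R1)
    (ImV : Matrix n p ℂ)
    (hImV : ImV = Matrix.of fun i j => ((V1 i j).im : ℂ))
    (Vi : Matrix p m ℂ) (hVi : Vi = ImVᵀ * Bc)
    (S : Matrix p p ℂ)
    (hS : S = (σ.im : ℂ) • Y1 + (V1ᴴ * Bc) * Viᴴ)
    (hSinv : IsUnit S) :
    V2 = V1 + (2 * starRingEnd ℂ σ) • (ImV * (S⁻¹ * Y1)) := by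
  set α : ℂ := (Real.sqrt (-2 * σ.re) : ℂ)
  have hN : Acᴴ - X0c * Gc = (Aᵀ - X0 * (B * Bᵀ)).map Complex.ofReal := by
    subst hAc hX0c hBc hGc
    ext i j
    simp [mul_apply]
  have hR : α • R0c = (Real.sqrt (-2 * σ.re) • R0).map Complex.ofReal := by
    ext i j
    simp [α, hR0c]
  have hM0 : ((Aᵀ - X0 * (B * Bᵀ)).map Complex.ofReal + σ • 1) * V1 =
      (Real.sqrt (-2 * σ.re) • R0).map Complex.ofReal := by
    rw [← hN, ← hR, hV1, Matrix.smul_mul, Matrix.mul_smul,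
      mul_nonsing_inv_cancel_left _ _ ((isUnit_iff_isUnit_det _).mp hinv1)]
  have hM1 : Acᴴ - X1 * Gc + conj σ • 1 =
      (Acᴴ - X0c * Gc) + conj σ • 1 - V1 * Y1⁻¹ * (V1ᴴ * Gc) := by
    rw [hX1, Matrix.add_mul, Matrix.mul_assoc (V1 * Y1⁻¹)]; abel
  have hre : (2 * σ.re : ℂ) ≠ 0 := mul_ne_zero two_ne_zero (Complex.ofReal_ne_zero.mpr hσre.ne)
  have hUV : V1ᴴ * Gc * V1 = (2 * σ.re : ℂ) • (1 - Y1) :=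
    hGc ▸ conjTranspose_mul_mul_self_eq_smul_one_sub hre hY1
  have hUW : V1ᴴ * Gc * ImV = V1ᴴ * Bc * Viᴴ := by
    rw [hGc, hVi, conjTranspose_mul, hImV, transpose_conjTranspose_of_im]
    simp only [Matrix.mul_assoc]
  have hdetY := (isUnit_iff_isUnit_det _).mp hY1inv
  have hαα : α * α = -(2 * σ.re : ℂ) := by
    rw [← Complex.ofReal_mul, Real.mul_self_sqrt (by linarith)]; push_cast; ring
  have hMV1 : (Acᴴ - X1 * Gc + conj σ • 1) * V1 = α • R1 + (2 * conj σ) • V1 := by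
    rw [hM1, hN, add_smul_one_sub_mul_inv_mul_mul_self hdetY hM0 hUV, Complex.conj_sub_add_two_re,
      ← hR, hR1, smul_add, smul_smul, hαα, neg_smul, ← sub_eq_add_neg]
  have hMImV : (Acᴴ - X1 * Gc + conj σ • 1) * ImV = -(V1 * (Y1⁻¹ * S)) := by
    rw [hM1, hN, sub_mul_inv_mul_mul_eq_neg hdetY (hImV ▸ add_conj_smul_one_mul_of_im hM0),
      hUW, hS]
  have hclaim := mul_add_smul_mul_inv_mul_eq hdetY ((isUnit_iff_isUnit_det _).mp hSinv) hMV1 hMImV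
  rw [hV2, Matrix.smul_mul, ← Matrix.mul_smul, ← hclaim,
    nonsing_inv_mul_cancel_left _ _ ((isUnit_iff_isUnit_det _).mp hinv2)]

theorem radi_double_step_conjugate_shift
    {n m p : Type*} [Fintype n] [DecidableEq n] [Fintype m] [Fintype p] [DecidableEq p]
    (A X0 : Matrix n n ℝ) (B : Matrix n m ℝ) (R0 : Matrix n p ℝ)
    (σ : ℂ) (hσre : σ.re < 0) (hσim : σ.im ≠ 0)
    (Ac X0c : Matrix n n ℂ) (Bc : Matrix n m ℂ) (R0c : Matrix n p ℂ)
    (hAc : Ac = A.map Complex.ofReal) (hX0c : X0c = X0.map Complex.ofReal)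
    (hBc : Bc = B.map Complex.ofReal) (hR0c : R0c = R0.map Complex.ofReal)
    (Gc : Matrix n n ℂ) (hGc : Gc = Bc * Bcᴴ)
    (hinv1 : IsUnit (Acᴴ - X0c * Gc + σ • (1 : Matrix n n ℂ)))
    (V1 : Matrix n p ℂ)
    (hV1 : V1 = (Real.sqrt (-2 * σ.re) : ℂ) •
        (Acᴴ - X0c * Gc + σ • (1 : Matrix n n ℂ))⁻¹ * R0c)
    (Y1 : Matrix p p ℂ)
    (hY1 : Y1 = (1 : Matrix p p ℂ) -
        (1 / (2 * (σ.re : ℂ))) • ((V1ᴴ * Bc) * (V1ᴴ * Bc)ᴴ))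
    (hY1inv : IsUnit Y1)
    (X1 : Matrix n n ℂ) (hX1 : X1 = X0c + V1 * Y1⁻¹ * V1ᴴ)
    (R1 : Matrix n p ℂ)
    (hR1 : R1 = R0c + (Real.sqrt (-2 * σ.re) : ℂ) • (V1 * Y1⁻¹))
    (hinv2 : IsUnit (Acᴴ - X1 * Gc + (starRingEnd ℂ σ) • (1 : Matrix n n ℂ)))
    (V2 : Matrix n p ℂ)
    (hV2 : V2 = (Real.sqrt (-2 * σ.re) : ℂ) •
        (Acᴴ - X1 * Gc + (starRingEnd ℂ σ) • (1 : Matrix n n ℂ))⁻¹ * R1)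
    (ImV : Matrix n p ℂ)
    (hImV : ImV = Matrix.of fun i j => ((V1 i j).im : ℂ))
    (Vi : Matrix p m ℂ) (hVi : Vi = ImVᵀ * Bc)
    (S : Matrix p p ℂ)
    (hS : S = (σ.im : ℂ) • Y1 + (V1ᴴ * Bc) * Viᴴ)
    (hSinv : IsUnit S) :
    V2 = V1 + (2 * starRingEnd ℂ σ) • (ImV * (S⁻¹ * Y1)) :=
  radi_double_step_conjugate_shift_general A X0 B R0 σ hσre Ac X0c Bc R0c hAc hX0c hBc hR0c Gc hGc
    hinv1 V1 hV1 Y1 hY1 hY1inv X1 hX1 R1 hR1 hinv2 V2 hV2 ImV hImV Vi hVi S hS hSinv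
end
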